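/- Convergence of dyadic Riemann–Stieltjes sums of the Young integral (Section 5). Let d ≥ 1 and β, γ ∈ (0,1) with γ > (d−1)/d and β + dγ > d. Let f : [0,1]^d → ℝ be β-Hölder continuous and let ω be an additive function on the dyadic cubes of [0,1]^d with ‖ω‖_γ < ∞. For each n ≥ 0 and each dyadic cube K of generation n choose a tag x_{n,K} ∈ K, and set S_n = Σ_{K of generation n} f(x_{n,K}) ω(K). Then the sequence (S_n) converges as n → ∞, and its limit does not depend on the choice of the tags x_{n,K}. -/

import Mathlib

open MeasureTheory Filter
open scoped BigOperators ENNReal Classical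

noncomputable section

/-- Points of `ℝ^d` with the Euclidean norm. -/
abbrev Euc (d : ℕ) := EuclideanSpace ℝ (Fin d)

/-- The closed dyadic cube of generation `n` with lower corner `2^{-n} k` inside `[0,1]^d`. -/
def dyCube (d n : ℕ) (k : Fin d → ℕ) : Set (Euc d) :=
  {x | ∀ i, (k i : ℝ) / 2 ^ n ≤ x i ∧ x i ≤ ((k i : ℝ) + 1) / 2 ^ n}

/-- The unit cube `[0,1]^d`. -/
def uCube (d : ℕ) : Set (Euc d) := dyCube d 0 (fun _ => 0)

/-- Volume `2^{-nd}` of a dyadic cube of generation `n`. -/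
def dyVol (d n : ℕ) : ℝ := ((2 : ℝ) ^ (n * d))⁻¹

/-- A real valued function on the dyadic cubes of `[0,1]^d` (encoded by generation and
lower-corner index) is additive if its value on each cube is the sum of its values
on the `2^d` children. -/
def IsAdditiveDy (d : ℕ) (ω : ∀ _ : ℕ, (Fin d → ℕ) → ℝ) : Prop :=
  ∀ n (k : Fin d → ℕ), (∀ i, k i < 2 ^ n) →
    ω n k = ∑ j : Fin d → Fin 2, ω (n + 1) (fun i => 2 * k i + (j i : ℕ))

/-- The Haar function `g_{n,k,ε}` on `[0,1]^d`. -/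
def haarF (d n : ℕ) (k : Fin d → ℕ) (ε : Fin d → Bool) (x : Euc d) : ℝ :=
  if ∀ i, (k i : ℝ) / 2 ^ n ≤ x i ∧ x i < ((k i : ℝ) + 1) / 2 ^ n then
    (2 : ℝ) ^ (((n * d : ℕ) : ℝ) / 2) *
      ∏ i, (if ε i then (if (2 : ℝ) ^ n * x i - (k i : ℝ) < 1 / 2 then (1 : ℝ) else -1) else 1)
  else 0

/-- The Faber–Schauder coefficient `a_{n,k,ε}(ω)` of an additive function on dyadic cubes. -/
def fsCoeff (d : ℕ) (ω : ∀ _ : ℕ, (Fin d → ℕ) → ℝ) (n : ℕ) (k : Fin d → ℕ)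
    (ε : Fin d → Bool) : ℝ :=
  (2 : ℝ) ^ (((n * d : ℕ) : ℝ) / 2) *
    ∑ j : Fin d → Fin 2,
      (∏ i, (if ε i then (if j i = 0 then (1 : ℝ) else -1) else 1)) *
        ω (n + 1) (fun i => 2 * k i + (j i : ℕ))

/-! ### Auxiliary lemmas -/

/-- The lower-corner tag of a dyadic cube. -/
def cornerTag (d n : ℕ) (k : Fin d → ℕ) : Euc d := WithLp.toLp 2 (fun i => (k i : ℝ) / 2 ^ n)

lemma cornerTag_mem (d n : ℕ) (k : Fin d → ℕ) : cornerTag d n k ∈ dyCube d n k := by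
  intro i
  have hp : (0:ℝ) < 2^n := by positivity
  constructor
  · exact le_refl _
  · show (k i : ℝ) / 2^n ≤ _
    gcongr
    linarith

lemma child_lt (n a b : ℕ) (ha : a < 2^n) (hb : b < 2) : 2*a + b < 2^(n+1) := by
  have : (2:ℕ)^(n+1) = 2 * 2^n := by rw [pow_succ]; ring
  omega

lemma sum_children (d n : ℕ) (F : (Fin d → ℕ) → ℝ) :
    (∑ k' : Fin d → Fin (2^(n+1)), F (fun i => (k' i : ℕ))) =
    ∑ k : Fin d → Fin (2^n), ∑ j : Fin d → Fin 2,
      F (fun i => 2 * (k i : ℕ) + (j i : ℕ)) := by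
  classical
  have hinj : Function.Injective
      (fun (p : (Fin d → Fin (2^n)) × (Fin d → Fin 2)) =>
        (fun i => (⟨2 * (p.1 i : ℕ) + (p.2 i : ℕ),
          child_lt n _ _ (p.1 i).isLt (p.2 i).isLt⟩ : Fin (2^(n+1))))) := by
    intro p q h
    have h' : ∀ i, 2 * (p.1 i : ℕ) + (p.2 i : ℕ) = 2 * (q.1 i : ℕ) + (q.2 i : ℕ) := fun i =>
      congrArg Fin.val (congrFun h i)
    refine Prod.ext (funext fun i => Fin.ext ?_) (funext fun i => Fin.ext ?_)
    · have h1 := h' i; have h2 := (p.2 i).isLt; have h3 := (q.2 i).isLt; omega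
    · have h1 := h' i; have h2 := (p.2 i).isLt; have h3 := (q.2 i).isLt; omega
  have hbij : Function.Bijective
      (fun (p : (Fin d → Fin (2^n)) × (Fin d → Fin 2)) =>
        (fun i => (⟨2 * (p.1 i : ℕ) + (p.2 i : ℕ),
          child_lt n _ _ (p.1 i).isLt (p.2 i).isLt⟩ : Fin (2^(n+1))))) := by
    refine (Fintype.bijective_iff_injective_and_card _).mpr ⟨hinj, ?_⟩
    simp only [Fintype.card_prod, Fintype.card_fun, Fintype.card_fin]
    rw [pow_succ, mul_pow]
  calc (∑ k' : Fin d → Fin (2^(n+1)), F (fun i => (k' i : ℕ)))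
      = ∑ p : (Fin d → Fin (2^n)) × (Fin d → Fin 2),
          F (fun i => 2 * (p.1 i : ℕ) + (p.2 i : ℕ)) :=
        (Fintype.sum_bijective _ hbij _ _ (fun p => rfl)).symm
    _ = ∑ k : Fin d → Fin (2^n), ∑ j : Fin d → Fin 2,
          F (fun i => 2 * (k i : ℕ) + (j i : ℕ)) := Fintype.sum_prod_type _

lemma mem_uCube (d n : ℕ) (k : Fin d → ℕ) (hk : ∀ i, k i < 2^n) :
    dyCube d n k ⊆ uCube d := by
  intro x hx i
  obtain ⟨h1, h2⟩ := hx i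
  have hp : (0:ℝ) < 2^n := by positivity
  have hki : ((k i : ℝ) + 1) ≤ 2^n := by exact_mod_cast Nat.succ_le_of_lt (hk i)
  constructor
  · have h0 : (0:ℝ) ≤ (k i : ℝ)/2^n := by positivity
    simpa using le_trans h0 h1
  · have h3 : ((k i:ℝ)+1)/2^n ≤ 1 := by rw [div_le_one hp]; exact hki
    simpa using le_trans h2 h3

lemma child_subset (d n : ℕ) (k j k' : Fin d → ℕ) (hj : ∀ i, j i < 2)
    (hk' : ∀ i, k' i = 2 * k i + j i) : dyCube d (n+1) k' ⊆ dyCube d n k := by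
  intro x hx i
  obtain ⟨h1, h2⟩ := hx i
  have hji : (j i : ℝ) ≤ 1 := by exact_mod_cast Nat.lt_succ_iff.mp (hj i)
  have hj0 : (0:ℝ) ≤ (j i : ℝ) := Nat.cast_nonneg _
  have hp : (0:ℝ) < 2^n := by positivity
  have hp1 : (0:ℝ) < 2^(n+1) := by positivity
  have hkey : (2:ℝ)^(n+1) = 2 * 2^n := by rw [pow_succ]; ring
  have hcast : (k' i : ℝ) = 2 * (k i : ℝ) + (j i : ℝ) := by
    rw [hk' i]; push_cast; ring
  rw [hcast] at h1 h2
  constructor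
  · have e1 : (k i : ℝ)/2^n = (2 * (k i : ℝ))/2^(n+1) := by
      rw [hkey, mul_div_mul_left _ _ (two_ne_zero)]
    rw [e1]
    calc (2 * (k i : ℝ))/2^(n+1) ≤ (2 * (k i : ℝ) + j i)/2^(n+1) :=
        div_le_div_of_nonneg_right (by linarith) hp1.le
    _ ≤ x i := h1
  · have e2 : ((k i : ℝ) + 1)/2^n = (2 * (k i : ℝ) + 2)/2^(n+1) := by
      rw [hkey]; field_simp
    rw [e2]
    calc x i ≤ (2 * (k i : ℝ) + j i + 1)/2^(n+1) := h2
    _ ≤ (2 * (k i : ℝ) + 2)/2^(n+1) :=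
        div_le_div_of_nonneg_right (by linarith) hp1.le

lemma norm_sub_le_dy (d n : ℕ) (k : Fin d → ℕ) {x y : Euc d}
    (hx : x ∈ dyCube d n k) (hy : y ∈ dyCube d n k) :
    ‖x - y‖ ≤ Real.sqrt d / 2^n := by
  have hp : (0:ℝ) < 2^n := by positivity
  rw [EuclideanSpace.norm_eq]
  have hbound : ∀ i, ‖(x - y) i‖^2 ≤ (1/2^n)^2 := by
    intro i
    have h1 := hx i; have h2 := hy i
    have hsub : ((k i:ℝ)+1)/2^n - (k i:ℝ)/2^n = 1/2^n := by ring
    have habs : |x i - y i| ≤ 1/2^n := by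
      rw [abs_le]; constructor <;> [linarith [h1.1, h2.2]; linarith [h1.2, h2.1]]
    have : ‖(x - y) i‖ = |x i - y i| := by
      simp [PiLp.sub_apply, Real.norm_eq_abs]
    rw [this]
    exact pow_le_pow_left₀ (abs_nonneg _) habs 2
  have hsum : (∑ i, ‖(x-y) i‖^2) ≤ (d:ℝ) * (1/2^n)^2 := by
    calc (∑ i, ‖(x-y) i‖^2) ≤ ∑ _i : Fin d, (1/2^n)^2 :=
      Finset.sum_le_sum (fun i _ => hbound i)
    _ = (d:ℝ) * (1/2^n)^2 := by rw [Finset.sum_const, Finset.card_univ, nsmul_eq_mul]; simp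
  calc Real.sqrt (∑ i, ‖(x-y) i‖^2) ≤ Real.sqrt ((d:ℝ) * (1/2^n)^2) := Real.sqrt_le_sqrt hsum
  _ = Real.sqrt d * (1/2^n) := by
      rw [Real.sqrt_mul (Nat.cast_nonneg d), Real.sqrt_sq (by positivity)]
  _ = Real.sqrt d / 2^n := by ring

lemma dyVol_rpow (d n : ℕ) (γ : ℝ) :
    dyVol d n ^ γ = (2:ℝ) ^ (-(((n*d:ℕ)):ℝ) * γ) := by
  unfold dyVol
  rw [← Real.rpow_natCast (2:ℝ) (n*d), ← Real.rpow_neg (by norm_num),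
    ← Real.rpow_mul (by norm_num)]

lemma sqrt_div_rpow (d n : ℕ) (β : ℝ) :
    (Real.sqrt d / 2^n) ^ β = Real.sqrt d ^ β * (2:ℝ)^(-((n:ℝ) * β)) := by
  rw [Real.div_rpow (Real.sqrt_nonneg _) (by positivity), ← Real.rpow_natCast (2:ℝ) n,
    ← Real.rpow_mul (by norm_num), div_eq_mul_inv, ← Real.rpow_neg (by norm_num)]

lemma cast_card (d n : ℕ) :
    (Fintype.card (Fin d → Fin (2^n)) : ℝ) = (2:ℝ) ^ ((n:ℝ)*(d:ℝ)) := by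
  have h : Fintype.card (Fin d → Fin (2^n)) = 2^(n*d) := by
    simp [Fintype.card_fun, ← pow_mul]
  rw [h, show (((2:ℕ)^(n*d) : ℕ) : ℝ) = (2:ℝ)^(n*d) by push_cast; ring,
    ← Real.rpow_natCast (2:ℝ) (n*d)]
  congr 1
  push_cast
  ring

lemma combine (a b c L' M' D' : ℝ) :
    (2:ℝ)^a * ((L' * (D' * (2:ℝ)^b)) * (M' * (2:ℝ)^c)) = L' * M' * D' * (2:ℝ)^(a+b+c) := by
  rw [Real.rpow_add two_pos, Real.rpow_add two_pos]; ring

lemma abs_sum_le_card_mul {ι : Type*} [Fintype ι] (t : ι → ℝ) (B : ℝ) (h : ∀ k, |t k| ≤ B) :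
    |∑ k, t k| ≤ (Fintype.card ι : ℝ) * B := by
  calc |∑ k, t k| ≤ ∑ k, |t k| := Finset.abs_sum_le_sum_abs _ _
  _ ≤ ∑ _k : ι, B := Finset.sum_le_sum (fun k _ => h k)
  _ = (Fintype.card ι : ℝ) * B := by
      rw [Finset.sum_const, Finset.card_univ, nsmul_eq_mul]

lemma numeric (d n m : ℕ) (β γ L M : ℝ) :
    (Fintype.card (Fin d → Fin (2^m)) : ℝ) *
      ((L * (Real.sqrt d / 2^n)^β) * (M * dyVol d m ^ γ)) =
    L * M * Real.sqrt d ^ β *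
      (2:ℝ) ^ ((m:ℝ)*(d:ℝ) - (n:ℝ)*β - (m:ℝ)*(d:ℝ)*γ) := by
  rw [cast_card, dyVol_rpow, sqrt_div_rpow, combine]
  congr 1
  push_cast
  ring

lemma term_bound (d : ℕ) (β γ L M : ℝ) (hβ0 : 0 < β) (hL0 : 0 ≤ L)
    (f : Euc d → ℝ)
    (hf : ∀ x ∈ uCube d, ∀ y ∈ uCube d, |f x - f y| ≤ L * ‖x - y‖ ^ β)
    (ω : ∀ _ : ℕ, (Fin d → ℕ) → ℝ)
    (hM : ∀ n (k : Fin d → ℕ), (∀ i, k i < 2 ^ n) → |ω n k| ≤ M * dyVol d n ^ γ)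
    (n m : ℕ) (P K' : Fin d → ℕ) (hP : ∀ i, P i < 2^n) (hK' : ∀ i, K' i < 2^m)
    (a b : Euc d) (ha : a ∈ dyCube d n P) (hb : b ∈ dyCube d n P) :
    |(f a - f b) * ω m K'| ≤ (L * (Real.sqrt d / 2^n)^β) * (M * dyVol d m ^ γ) := by
  have hU := mem_uCube d n P hP
  have h1 : |f a - f b| ≤ L * (Real.sqrt d / 2^n)^β := by
    calc |f a - f b| ≤ L * ‖a - b‖ ^ β := hf a (hU ha) b (hU hb)
    _ ≤ L * (Real.sqrt d / 2^n)^β := by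
        apply mul_le_mul_of_nonneg_left _ hL0
        exact Real.rpow_le_rpow (norm_nonneg _) (norm_sub_le_dy d n P ha hb) hβ0.le
  have h2 : |ω m K'| ≤ M * dyVol d m ^ γ := hM m K' hK'
  rw [abs_mul]
  exact mul_le_mul h1 h2 (abs_nonneg _) (le_trans (abs_nonneg _) h1)

/-- **Convergence of dyadic Riemann–Stieltjes sums of the Young integral** (Section 5):
the sums `S_n = Σ_{K of generation n} f(x_{n,K}) ω(K)` converge, and the limit
does not depend on the choice of the tags. -/
theorem riemann_stieltjes_sums_converge (d : ℕ) (hd : 0 < d) (β γ : ℝ)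
    (hβ0 : 0 < β) (hβ1 : β < 1) (hγ0 : 0 < γ) (hγ1 : γ < 1)
    (hγd : ((d : ℝ) - 1) / d < γ) (hβγ : (d : ℝ) < β + d * γ)
    (f : Euc d → ℝ) (L : ℝ)
    (hf : ∀ x ∈ uCube d, ∀ y ∈ uCube d, |f x - f y| ≤ L * ‖x - y‖ ^ β)
    (ω : ∀ _ : ℕ, (Fin d → ℕ) → ℝ) (hω : IsAdditiveDy d ω)
    (M : ℝ) (hM : ∀ n (k : Fin d → ℕ), (∀ i, k i < 2 ^ n) → |ω n k| ≤ M * dyVol d n ^ γ) :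
    ∃ I : ℝ, ∀ x : ∀ _ : ℕ, (Fin d → ℕ) → Euc d,
      (∀ n (k : Fin d → ℕ), (∀ i, k i < 2 ^ n) → x n k ∈ dyCube d n k) →
      Tendsto (fun n => ∑ k : Fin d → Fin (2 ^ n),
          f (x n (fun i => (k i : ℕ))) * ω n (fun i => (k i : ℕ)))
        atTop (nhds I) := by
  classical
  -- nonnegativity of `L`
  have h0mem : (0 : Euc d) ∈ uCube d := by
    intro i
    have hz : (0 : Euc d) i = 0 := rfl
    constructor <;> simp [hz]
  have hp1mem : EuclideanSpace.single (⟨0, hd⟩ : Fin d) (1:ℝ) ∈ uCube d := by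
    intro i
    constructor
    · simp only [EuclideanSpace.single_apply]
      split <;> norm_num
    · simp only [EuclideanSpace.single_apply]
      split <;> norm_num
  have hL0 : 0 ≤ L := by
    have h := hf _ hp1mem _ h0mem
    rw [sub_zero, EuclideanSpace.norm_single, norm_one, Real.one_rpow, mul_one] at h
    exact le_trans (abs_nonneg _) h
  have hM0 : 0 ≤ M := by
    have h := hM 0 (fun _ => 0) (fun i => by norm_num)
    simp only [dyVol, Nat.zero_mul, pow_zero, inv_one, Real.one_rpow, mul_one] at h
    exact le_trans (abs_nonneg _) h
  -- constants
  set ρ : ℝ := (2:ℝ) ^ ((d:ℝ) - β - (d:ℝ)*γ) with hρdef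
  set C : ℝ := L * M * Real.sqrt d ^ β * (2:ℝ) ^ ((d:ℝ)*(1-γ)) with hCdef
  have hρ0 : (0:ℝ) < ρ := Real.rpow_pos_of_pos two_pos _
  have hρ1 : ρ < 1 :=
    Real.rpow_lt_one_of_one_lt_of_neg one_lt_two (by linarith)
  have hLMD : 0 ≤ L * M * Real.sqrt d ^ β :=
    mul_nonneg (mul_nonneg hL0 hM0) (Real.rpow_nonneg (Real.sqrt_nonneg _) _)
  have hρn : ∀ n : ℕ, ρ ^ n = (2:ℝ) ^ (((d:ℝ) - β - (d:ℝ)*γ) * n) := by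
    intro n
    rw [hρdef, ← Real.rpow_natCast ((2:ℝ) ^ ((d:ℝ) - β - (d:ℝ)*γ)) n,
      ← Real.rpow_mul (by norm_num)]
  have hE1 : ∀ n : ℕ, L * M * Real.sqrt d ^ β *
      (2:ℝ) ^ (((n+1:ℕ):ℝ)*(d:ℝ) - (n:ℝ)*β - ((n+1:ℕ):ℝ)*(d:ℝ)*γ) = C * ρ^n := by
    intro n
    rw [hρn n, hCdef, mul_assoc (L * M * Real.sqrt d ^ β), ← Real.rpow_add two_pos]
    congr 2
    push_cast
    ring
  have hE2 : ∀ n : ℕ, L * M * Real.sqrt d ^ β *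
      (2:ℝ) ^ ((n:ℝ)*(d:ℝ) - (n:ℝ)*β - (n:ℝ)*(d:ℝ)*γ) ≤ C * ρ^n := by
    intro n
    rw [hρn n, hCdef, mul_assoc (L * M * Real.sqrt d ^ β), ← Real.rpow_add two_pos]
    apply mul_le_mul_of_nonneg_left _ hLMD
    apply Real.rpow_le_rpow_of_exponent_le one_le_two
    have h0 : 0 ≤ (d:ℝ)*(1-γ) := mul_nonneg (Nat.cast_nonneg d) (by linarith)
    nlinarith
  -- the geometric bound for consecutive sums
  have main : ∀ (x : ∀ _ : ℕ, (Fin d → ℕ) → Euc d),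
      (∀ n (k : Fin d → ℕ), (∀ i, k i < 2^n) → x n k ∈ dyCube d n k) → ∀ n : ℕ,
      |(∑ k : Fin d → Fin (2^(n+1)), f (x (n+1) fun i => (k i:ℕ)) * ω (n+1) fun i => (k i:ℕ)) -
       (∑ k : Fin d → Fin (2^n), f (x n fun i => (k i:ℕ)) * ω n fun i => (k i:ℕ))| ≤
      C * ρ^n := by
    intro x hx n
    have hsplit :
        (∑ k : Fin d → Fin (2^(n+1)), f (x (n+1) fun i => (k i:ℕ)) * ω (n+1) fun i => (k i:ℕ)) -
        (∑ k : Fin d → Fin (2^n), f (x n fun i => (k i:ℕ)) * ω n fun i => (k i:ℕ)) =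
        ∑ k' : Fin d → Fin (2^(n+1)),
          (f (x (n+1) fun i => (k' i:ℕ)) - f (x n fun i => (k' i:ℕ)/2)) *
            ω (n+1) fun i => (k' i:ℕ) := by
      have h1 := sum_children d n (fun v => f (x (n+1) v) * ω (n+1) v)
      have h2 := sum_children d n
        (fun v => (f (x (n+1) v) - f (x n fun i => v i / 2)) * ω (n+1) v)
      simp only [] at h1 h2
      have hB : (∑ k : Fin d → Fin (2^n), f (x n fun i => (k i:ℕ)) * ω n fun i => (k i:ℕ)) =
          ∑ k : Fin d → Fin (2^n), ∑ j : Fin d → Fin 2,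
            f (x n fun i => (k i:ℕ)) * ω (n+1) fun i => 2 * (k i:ℕ) + (j i:ℕ) := by
        refine Finset.sum_congr rfl fun k _ => ?_
        rw [hω n _ (fun i => (k i).isLt), Finset.mul_sum]
      rw [h1, hB, h2, ← Finset.sum_sub_distrib]
      refine Finset.sum_congr rfl fun k _ => ?_
      rw [← Finset.sum_sub_distrib]
      refine Finset.sum_congr rfl fun j _ => ?_
      have hpar : (fun i => (2*(k i:ℕ)+(j i:ℕ))/2) = (fun i => (k i:ℕ)) := by
        funext i; have := (j i).isLt; omega
      rw [hpar, sub_mul]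
    rw [hsplit]
    have hterm : ∀ k' : Fin d → Fin (2^(n+1)),
        |(f (x (n+1) fun i => (k' i:ℕ)) - f (x n fun i => (k' i:ℕ)/2)) *
          ω (n+1) (fun i => (k' i:ℕ))| ≤
        (L * (Real.sqrt d / 2^n)^β) * (M * dyVol d (n+1) ^ γ) := by
      intro k'
      have hk' : ∀ i, ((fun i => (k' i:ℕ)) i) < 2^(n+1) := fun i => (k' i).isLt
      have hpow : (2:ℕ)^(n+1) = 2*2^n := by rw [pow_succ]; ring
      have hPlt : ∀ i, ((fun i => (k' i:ℕ)/2) i) < 2^n := by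
        intro i; have := (k' i).isLt; simp only []; omega
      have hsub : dyCube d (n+1) (fun i => (k' i:ℕ)) ⊆ dyCube d n (fun i => (k' i:ℕ)/2) :=
        child_subset d n _ (fun i => (k' i:ℕ) % 2) _ (fun i => Nat.mod_lt _ two_pos)
          (fun i => by
            show (k' i:ℕ) = 2 * ((k' i:ℕ)/2) + ((k' i:ℕ) % 2)
            omega)
      exact term_bound d β γ L M hβ0 hL0 f hf ω hM n (n+1) _ _ hPlt hk'
        _ _ (hsub (hx (n+1) _ hk')) (hx n _ hPlt)
    calc |∑ k' : Fin d → Fin (2^(n+1)),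
          (f (x (n+1) fun i => (k' i:ℕ)) - f (x n fun i => (k' i:ℕ)/2)) *
            ω (n+1) (fun i => (k' i:ℕ))| ≤
        (Fintype.card (Fin d → Fin (2^(n+1))) : ℝ) *
          ((L * (Real.sqrt d / 2^n)^β) * (M * dyVol d (n+1) ^ γ)) :=
      abs_sum_le_card_mul _ _ hterm
    _ = L * M * Real.sqrt d ^ β *
        (2:ℝ) ^ (((n+1:ℕ):ℝ)*(d:ℝ) - (n:ℝ)*β - ((n+1:ℕ):ℝ)*(d:ℝ)*γ) :=
      numeric d n (n+1) β γ L M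
    _ = C * ρ^n := hE1 n
  -- the bound comparing two tag choices
  have main2 : ∀ (x y : ∀ _ : ℕ, (Fin d → ℕ) → Euc d),
      (∀ n (k : Fin d → ℕ), (∀ i, k i < 2^n) → x n k ∈ dyCube d n k) →
      (∀ n (k : Fin d → ℕ), (∀ i, k i < 2^n) → y n k ∈ dyCube d n k) → ∀ n : ℕ,
      |(∑ k : Fin d → Fin (2^n), f (x n fun i => (k i:ℕ)) * ω n fun i => (k i:ℕ)) -
       (∑ k : Fin d → Fin (2^n), f (y n fun i => (k i:ℕ)) * ω n fun i => (k i:ℕ))| ≤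
      C * ρ^n := by
    intro x y hx hy n
    have hsplit :
        (∑ k : Fin d → Fin (2^n), f (x n fun i => (k i:ℕ)) * ω n fun i => (k i:ℕ)) -
        (∑ k : Fin d → Fin (2^n), f (y n fun i => (k i:ℕ)) * ω n fun i => (k i:ℕ)) =
        ∑ k : Fin d → Fin (2^n),
          (f (x n fun i => (k i:ℕ)) - f (y n fun i => (k i:ℕ))) * ω n fun i => (k i:ℕ) := by
      rw [← Finset.sum_sub_distrib]
      exact Finset.sum_congr rfl fun k _ => (sub_mul _ _ _).symm
    rw [hsplit]
    have hterm : ∀ k : Fin d → Fin (2^n),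
        |(f (x n fun i => (k i:ℕ)) - f (y n fun i => (k i:ℕ))) * ω n (fun i => (k i:ℕ))| ≤
        (L * (Real.sqrt d / 2^n)^β) * (M * dyVol d n ^ γ) := fun k =>
      term_bound d β γ L M hβ0 hL0 f hf ω hM n n _ _ (fun i => (k i).isLt)
        (fun i => (k i).isLt) _ _ (hx n _ (fun i => (k i).isLt)) (hy n _ (fun i => (k i).isLt))
    calc |∑ k : Fin d → Fin (2^n),
          (f (x n fun i => (k i:ℕ)) - f (y n fun i => (k i:ℕ))) * ω n (fun i => (k i:ℕ))| ≤
        (Fintype.card (Fin d → Fin (2^n)) : ℝ) *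
          ((L * (Real.sqrt d / 2^n)^β) * (M * dyVol d n ^ γ)) :=
      abs_sum_le_card_mul _ _ hterm
    _ = L * M * Real.sqrt d ^ β *
        (2:ℝ) ^ ((n:ℝ)*(d:ℝ) - (n:ℝ)*β - (n:ℝ)*(d:ℝ)*γ) := numeric d n n β γ L M
    _ ≤ C * ρ^n := hE2 n
  -- convergence for the canonical (lower-corner) tags
  have hc : ∀ n (k : Fin d → ℕ), (∀ i, k i < 2^n) → cornerTag d n k ∈ dyCube d n k :=
    fun n k _ => cornerTag_mem d n k
  have hcauchy : CauchySeq (fun n => ∑ k : Fin d → Fin (2^n),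
      f (cornerTag d n fun i => (k i:ℕ)) * ω n fun i => (k i:ℕ)) := by
    apply cauchySeq_of_le_geometric ρ C hρ1
    intro n
    rw [Real.dist_eq, abs_sub_comm]
    exact main (fun n => cornerTag d n) hc n
  obtain ⟨I, hI⟩ := cauchySeq_tendsto_of_complete hcauchy
  refine ⟨I, fun x hx => ?_⟩
  have hzero : Tendsto (fun n =>
      (∑ k : Fin d → Fin (2^n), f (x n fun i => (k i:ℕ)) * ω n fun i => (k i:ℕ)) -
      (∑ k : Fin d → Fin (2^n), f (cornerTag d n fun i => (k i:ℕ)) * ω n fun i => (k i:ℕ)))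
      atTop (nhds 0) := by
    apply squeeze_zero_norm (fun n => main2 x (fun n => cornerTag d n) hx hc n)
    have h := (tendsto_pow_atTop_nhds_zero_of_lt_one hρ0.le hρ1).const_mul C
    simpa using h
  have hfin := hzero.add hI
  rw [zero_add] at hfin
  have heq : (fun n =>
      ((∑ k : Fin d → Fin (2^n), f (x n fun i => (k i:ℕ)) * ω n fun i => (k i:ℕ)) -
       (∑ k : Fin d → Fin (2^n), f (cornerTag d n fun i => (k i:ℕ)) * ω n fun i => (k i:ℕ))) +
      (∑ k : Fin d → Fin (2^n), f (cornerTag d n fun i => (k i:ℕ)) * ω n fun i => (k i:ℕ))) =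
      fun n => ∑ k : Fin d → Fin (2^n), f (x n fun i => (k i:ℕ)) * ω n fun i => (k i:ℕ) := by
    funext n; ring
  rwa [heq] at hfin

end
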